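/- Let G be a SetNim game and P its set of P-positions, and let z be a zero-one vector that is invariant for P (i.e., for all positions p and integers c with p + c·z ≥ 0, p ∈ P iff p + c·z ∈ P). If p ∉ P, z̃ is a non-negative integer combination of invariant vectors with p − z̃ ≥ 0, and m is a legal move taking p − z̃ to a position in P, then m is also a legal move from p, and p − m ∈ P. -/

import Mathlib

/-!
A non-negative combination z̃ of invariant vectors can be added to a P-position without leaving P,
one summand at a time. Since `m ≤ p - z̃`, the position `p - m` is `(p - z̃ - m) + z̃`.
-/

/-- A legal move in SetNim: at least one stack strictly decreases, all changed
stacks lie in some allowed move set, stacks weakly decrease. -/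
def Move {V : Type} (A : Set (Set V)) (p q : V → ℕ) : Prop :=
  q ≠ p ∧ (∀ i, q i ≤ p i) ∧ ∃ a ∈ A, ∀ i, q i ≠ p i → i ∈ a

/-- P-positions: positions all of whose options are N-positions. -/
def PPos {V : Type} [Fintype V] (A : Set (Set V)) (p : V → ℕ) : Prop :=
  ∀ q, Move A p q → ¬ PPos A q
termination_by Finset.univ.sum p
decreasing_by
  rename_i hq
  obtain ⟨hne, hle, -⟩ := hq
  refine Finset.sum_lt_sum (fun i _ => hle i) ?_
  obtain ⟨i, hi⟩ := Function.ne_iff.mp hne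
  exact ⟨i, Finset.mem_univ i, lt_of_le_of_ne (hle i) hi⟩

/-- A zero-one vector z is invariant for a set S of positions if adding any
integer multiple of z that keeps all entries non-negative preserves
membership in S. -/
def InvariantVec {n : ℕ} (S : Set (Fin n → ℕ)) (z : Fin n → ℕ) : Prop :=
  ∀ p : Fin n → ℕ, ∀ c : ℤ, (∀ i, 0 ≤ (p i : ℤ) + c * (z i : ℤ)) →
    (p ∈ S ↔ (fun i => ((p i : ℤ) + c * (z i : ℤ)).toNat) ∈ S)

/-- m is a legal move vector from position q: m is non-zero, m ≤ q
coordinatewise, and the support of m lies in some allowed move set. -/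
def LegalVec {n : ℕ} (A : Set (Set (Fin n))) (q m : Fin n → ℕ) : Prop :=
  m ≠ 0 ∧ (∀ i, m i ≤ q i) ∧ ∃ a ∈ A, ∀ i, m i ≠ 0 → i ∈ a

theorem InvariantVec.add_nsmul_mem_iff {n : ℕ} {S : Set (Fin n → ℕ)} {z : Fin n → ℕ}
    (h : InvariantVec S z) (p : Fin n → ℕ) (c : ℕ) : p + c • z ∈ S ↔ p ∈ S := by
  have key := h p c fun i => by positivity
  convert key.symm using 2
  funext i
  simp only [Pi.add_apply, Pi.smul_apply, smul_eq_mul]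
  omega

theorem InvariantVec.add_sum_nsmul_mem_iff {n : ℕ} {ι : Type*} {S : Set (Fin n → ℕ)}
    {z : ι → Fin n → ℕ} (hinv : ∀ j, InvariantVec S (z j)) (c : ι → ℕ) (s : Finset ι)
    (p : Fin n → ℕ) : p + ∑ j ∈ s, c j • z j ∈ S ↔ p ∈ S := by
  classical
  induction s using Finset.induction_on generalizing p with
  | empty => simp
  | insert a s ha ih =>
    rw [Finset.sum_insert ha, ← add_assoc, ih, (hinv a).add_nsmul_mem_iff]

theorem invariance_move {n k : ℕ} (A : Set (Set (Fin n)))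
    (z : Fin k → (Fin n → ℕ))
    (hinv : ∀ j, InvariantVec {p | PPos A p} (z j))
    (c : Fin k → ℕ) (p tz : Fin n → ℕ)
    (htz : tz = fun i => ∑ j, c j * z j i)
    (hle : ∀ i, tz i ≤ p i)
    (m : Fin n → ℕ)
    (hm : LegalVec A (fun i => p i - tz i) m)
    (hP : PPos A (fun i => p i - tz i - m i)) :
    LegalVec A p m ∧ PPos A (fun i => p i - m i) := by
  obtain ⟨hm0, hm_le, a, haA, hm_supp⟩ := hm
  refine ⟨⟨hm0, fun i => (hm_le i).trans (Nat.sub_le _ _), a, haA, hm_supp⟩, ?_⟩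
  have htz_sum : tz = ∑ j, c j • z j := by
    subst htz
    ext i
    simp [Finset.sum_apply]
  have hshift : (fun i => p i - m i) = (fun i => p i - tz i - m i) + tz := by
    funext i
    have := hm_le i
    have := hle i
    simp only [Pi.add_apply] at *
    omega
  have key := InvariantVec.add_sum_nsmul_mem_iff hinv c Finset.univ fun i => p i - tz i - m i
  rw [← htz_sum, ← hshift] at key
  exact key.mpr hP
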